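/- Let F be a proper filter on ω containing the Fréchet filter, let C be a nonempty closed subset of P(ω) with C ⊆ F, and let A₀ and A₁ be families of finite subsets of ω such that: every member of A₀ and of A₁ has at least 2 elements; A₀ and A₁ are upward closed among finite sets (if s ∈ Aᵢ and s ⊆ t with t finite then t ∈ Aᵢ); and every F-positive subset of ω contains a member of A₀ and a member of A₁. Then every F-positive set b ⊆ ω contains a finite set s such that s ∈ A₀ ∩ A₁ and |s ∩ c| ≥ 2 for every c ∈ C. -/

import Mathlib

/-
For `c ∈ C ⊆ F` the set `b ∩ c` is still `F`-positive, so it contains some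
`s_c ∈ A₀`. The sets `{a | s_c ⊆ a}` are open in Cantor space and cover the compact set `C`,
so finitely many `s_c` suffice. Their union, enlarged by members of `A₀` and `A₁` inside `b`,
lies in `b`, belongs to `A₀ ∩ A₁` by upward closure, and contains for each `c ∈ C` some
`s_c ⊆ c` with at least two elements.
-/

open scoped Classical

/-- The characteristic function of `a ⊆ ω`, identifying `P(ω)` with Cantor space `2^ω`. -/
noncomputable def chi (a : Set ℕ) : ℕ → Bool := fun n => if n ∈ a then true else false

/-- A family of subsets of `ω` is closed when viewed as a subset of Cantor space. -/
def CantorClosed (C : Set (Set ℕ)) : Prop := IsClosed (chi '' C)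

/-- A family of subsets of `ω` is compact when viewed as a subset of Cantor space. -/
def CantorCompact (C : Set (Set ℕ)) : Prop := IsCompact (chi '' C)

theorem Filter.compl_inter_notMem {α : Type*} {F : Filter α} {b c : Set α}
    (hb : bᶜ ∉ F) (hc : c ∈ F) : (b ∩ c)ᶜ ∉ F := fun h =>
  hb <| Filter.mem_of_superset (Filter.inter_mem h hc) fun _ ⟨hn, hnc⟩ hnb => hn ⟨hnb, hnc⟩

theorem chi_eq_true {a : Set ℕ} {n : ℕ} : chi a n = true ↔ n ∈ a := by
  simp [chi]

theorem CantorClosed.cantorCompact {C : Set (Set ℕ)} (hC : CantorClosed C) :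
    CantorCompact C :=
  IsClosed.isCompact hC

theorem CantorCompact.exists_finset_witnesses {C : Set (Set ℕ)} (hC : CantorCompact C)
    {A : Set (Finset ℕ)} (hA : ∀ c ∈ C, ∃ s ∈ A, (↑s : Set ℕ) ⊆ c) :
    ∃ T : Finset (Finset ℕ), (↑T : Set (Finset ℕ)) ⊆ A ∧ ∀ c ∈ C, ∃ s ∈ T, (↑s : Set ℕ) ⊆ c := by
  obtain ⟨t, ht⟩ := IsCompact.elim_finite_subcover hC
    (fun s : A => (↑s.1 : Set ℕ).pi fun _ => {true})
    (fun s => isOpen_set_pi s.1.finite_toSet fun _ _ => isOpen_discrete _) (by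
      rintro _ ⟨c, hc, rfl⟩
      obtain ⟨s, hsA, hsc⟩ := hA c hc
      exact Set.mem_iUnion.2 ⟨⟨s, hsA⟩, fun n hn => chi_eq_true.2 (hsc hn)⟩)
  refine ⟨t.map (Function.Embedding.subtype _), ?_, fun c hc => ?_⟩
  · intro s hs
    obtain ⟨s', -, rfl⟩ := Finset.mem_map.1 hs
    exact s'.2
  · obtain ⟨s, hst, hsc⟩ := Set.mem_iUnion₂.1 (ht ⟨c, hc, rfl⟩)
    exact ⟨s.1, Finset.mem_map_of_mem _ hst, fun n hn => chi_eq_true.1 (hsc n hn)⟩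

theorem positive_set_common_member_general (F : Filter ℕ)
    (C : Set (Set ℕ)) (hCcl : CantorClosed C) (hCF : C ⊆ F.sets)
    (A₀ A₁ : Set (Finset ℕ))
    (hcard₀ : ∀ s ∈ A₀, 2 ≤ s.card)
    (hup₀ : ∀ s ∈ A₀, ∀ t : Finset ℕ, s ⊆ t → t ∈ A₀)
    (hup₁ : ∀ s ∈ A₁, ∀ t : Finset ℕ, s ⊆ t → t ∈ A₁)
    (hpos₀ : ∀ b : Set ℕ, bᶜ ∉ F → ∃ s ∈ A₀, (↑s : Set ℕ) ⊆ b)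
    (hpos₁ : ∀ b : Set ℕ, bᶜ ∉ F → ∃ s ∈ A₁, (↑s : Set ℕ) ⊆ b) :
    ∀ b : Set ℕ, bᶜ ∉ F → ∃ s : Finset ℕ, (↑s : Set ℕ) ⊆ b ∧ s ∈ A₀ ∧ s ∈ A₁ ∧
      ∀ c ∈ C, 2 ≤ (s.filter (fun m => m ∈ c)).card := by
  intro b hb
  have hwitness : ∀ c ∈ C, ∃ s ∈ {s ∈ A₀ | (↑s : Set ℕ) ⊆ b}, (↑s : Set ℕ) ⊆ c := by
    intro c hc
    obtain ⟨s, hsA, hsbc⟩ := hpos₀ _ (Filter.compl_inter_notMem hb (hCF hc))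
    exact ⟨s, ⟨hsA, hsbc.trans Set.inter_subset_left⟩, hsbc.trans Set.inter_subset_right⟩
  obtain ⟨T, hTA, hTC⟩ := hCcl.cantorCompact.exists_finset_witnesses hwitness
  obtain ⟨t₀, ht₀, ht₀b⟩ := hpos₀ b hb
  obtain ⟨t₁, ht₁, ht₁b⟩ := hpos₁ b hb
  have hTb : (↑(T.biUnion id) : Set ℕ) ⊆ b := by
    intro n hn
    obtain ⟨s, hsT, hns⟩ := Finset.mem_biUnion.1 hn
    exact (hTA hsT).2 hns
  refine ⟨T.biUnion id ∪ t₀ ∪ t₁, ?_, hup₀ t₀ ht₀ _ (by grind), hup₁ t₁ ht₁ _ (by grind), ?_⟩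
  · simp only [Finset.coe_union, Set.union_subset_iff]
    exact ⟨⟨hTb, ht₀b⟩, ht₁b⟩
  · intro c hc
    obtain ⟨s, hsT, hsc⟩ := hTC c hc
    have hs_sub : s ⊆ (T.biUnion id ∪ t₀ ∪ t₁).filter (· ∈ c) := fun n hn =>
      Finset.mem_filter.2 ⟨by grind, hsc hn⟩
    exact (hcard₀ s (hTA hsT).1).trans (Finset.card_le_card hs_sub)

/-- If `C ⊆ F` is a nonempty closed set and `A₀, A₁` are upward-closed families of
finite sets (each member of size `≥ 2`) such that every `F`-positive set contains a
member of each, then every `F`-positive set contains a finite `s ∈ A₀ ∩ A₁` meeting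
every `c ∈ C` in at least two points. -/
theorem positive_set_common_member (F : Filter ℕ)
    (hproper : ∅ ∉ F) (hfrechet : Filter.cofinite ≤ F)
    (C : Set (Set ℕ)) (hCne : C.Nonempty) (hCcl : CantorClosed C) (hCF : C ⊆ F.sets)
    (A₀ A₁ : Set (Finset ℕ))
    (hcard₀ : ∀ s ∈ A₀, 2 ≤ s.card) (hcard₁ : ∀ s ∈ A₁, 2 ≤ s.card)
    (hup₀ : ∀ s ∈ A₀, ∀ t : Finset ℕ, s ⊆ t → t ∈ A₀)
    (hup₁ : ∀ s ∈ A₁, ∀ t : Finset ℕ, s ⊆ t → t ∈ A₁)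
    (hpos₀ : ∀ b : Set ℕ, bᶜ ∉ F → ∃ s ∈ A₀, (↑s : Set ℕ) ⊆ b)
    (hpos₁ : ∀ b : Set ℕ, bᶜ ∉ F → ∃ s ∈ A₁, (↑s : Set ℕ) ⊆ b) :
    ∀ b : Set ℕ, bᶜ ∉ F → ∃ s : Finset ℕ, (↑s : Set ℕ) ⊆ b ∧ s ∈ A₀ ∧ s ∈ A₁ ∧
      ∀ c ∈ C, 2 ≤ (s.filter (fun m => m ∈ c)).card :=
  positive_set_common_member_general F C hCcl hCF A₀ A₁ hcard₀ hup₀ hup₁ hpos₀ hpos₁
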